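/- If the space F_2(X) of nonempty subsets of X with at most 2 points, with the subspace Fell topology, is quasi-metrizable, then X is hemicompact, locally compact, and metrizable. -/

import Mathlib

open Set TopologicalSpace

/-- The hyperspace of nonempty closed subsets of `X`. -/
structure CL (X : Type*) [TopologicalSpace X] where
  carrier : Set X
  nonempty' : carrier.Nonempty
  isClosed' : IsClosed carrier

/-- A quasi-metric: like a metric but without symmetry. -/
def IsQuasiMetric {X : Type*} (d : X → X → ℝ) : Prop :=
  (∀ x y, 0 ≤ d x y) ∧ (∀ x y, d x y = 0 ↔ x = y) ∧ (∀ x y z, d x z ≤ d x y + d y z)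

/-- A space is quasi-metrizable if the balls of some quasi-metric generate its topology. -/
def QuasiMetrizable (X : Type*) [TopologicalSpace X] : Prop :=
  ∃ d : X → X → ℝ, IsQuasiMetric d ∧
    ∀ s : Set X, IsOpen s ↔ ∀ x ∈ s, ∃ ε > 0, {y | d x y < ε} ⊆ s

/-- The set of non-isolated points of `X`. -/
def NI (X : Type*) [TopologicalSpace X] : Set X := {x | ¬ IsOpen ({x} : Set X)}

/-- A subset is countably compact if every countable open cover has a finite subcover. -/
def CountablyCompactSet {Y : Type*} [TopologicalSpace Y] (s : Set Y) : Prop :=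
  ∀ f : ℕ → Set Y, (∀ n, IsOpen (f n)) → s ⊆ ⋃ n, f n → ∃ t : Finset ℕ, s ⊆ ⋃ n ∈ t, f n

/-- A space is hemicompact if some sequence of compact sets is cofinal in the compact sets. -/
def Hemicompact (X : Type*) [TopologicalSpace X] : Prop :=
  ∃ K : ℕ → Set X, (∀ n, IsCompact (K n)) ∧ ∀ L : Set X, IsCompact L → ∃ n, L ⊆ K n

/-- The Fell topology on `CL X`: subbase `U⁻` for `U` open nonempty and `(Kᶜ)⁺` for `K`
compact, `K ≠ X`. -/
def fellTop (X : Type*) [TopologicalSpace X] : TopologicalSpace (CL X) :=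
  generateFrom
    ({S | ∃ U : Set X, IsOpen U ∧ U.Nonempty ∧ S = {A : CL X | (A.carrier ∩ U).Nonempty}} ∪
     {S | ∃ K : Set X, IsCompact K ∧ K ≠ Set.univ ∧ S = {A : CL X | A.carrier ⊆ Kᶜ}})

noncomputable instance (X : Type*) [TopologicalSpace X] : TopologicalSpace (CL X) :=
  fellTop X

/-!
As `z` leaves every compact set, `{a, z}` converges to `{a}` in the Fell topology. A
quasi-metric makes `F₂(X)` first countable, so a countable neighbourhood basis at `{a}`
produces countably many compact sets that swallow every compact set missing `a`; two points
separated by open sets then give hemicompactness. Since `x ↦ {x}` embeds `X` into `F₂(X)`,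
`X` is first countable and quasi-metrizable; first countability with hemicompactness gives
local compactness, and each compact subset, being compact Hausdorff and quasi-metrizable, has
a Gδ diagonal and hence is metrizable. Covering `X` by the interiors of the countably many
cofinal compact sets makes it second countable, hence metrizable.
-/

open Filter Topology
open scoped Uniformity

def IsCompatibleQuasiMetric {Z : Type*} [TopologicalSpace Z] (ρ : Z → Z → ℝ) : Prop :=
  IsQuasiMetric ρ ∧ ∀ s : Set Z, IsOpen s ↔ ∀ x ∈ s, ∃ ε > 0, {y | ρ x y < ε} ⊆ s

namespace IsCompatibleQuasiMetric

variable {Z : Type*} [TopologicalSpace Z] {ρ : Z → Z → ℝ}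

theorem nhds_basis (hρ : IsCompatibleQuasiMetric ρ) (x : Z) :
    (𝓝 x).HasBasis (fun ε : ℝ => 0 < ε) fun ε => {y | ρ x y < ε} := by
  obtain ⟨⟨-, hzero, htri⟩, hopen⟩ := hρ
  refine ⟨fun s => ⟨fun hs => ?_, fun ⟨ε, hε, hsub⟩ => ?_⟩⟩
  · obtain ⟨U, hUs, hU, hxU⟩ := mem_nhds_iff.1 hs
    obtain ⟨ε, hε, hsub⟩ := (hopen U).1 hU x hxU
    exact ⟨ε, hε, hsub.trans hUs⟩
  · -- balls need not be open, but by the triangle inequality the centres of balls inside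
    -- the `ε`-ball around `x` form an open set
    let O := {w | ∃ δ > 0, {y | ρ w y < δ} ⊆ {y | ρ x y < ε}}
    have hO : IsOpen O := by
      refine (hopen O).2 fun w ⟨δ, hδ, hw⟩ => ⟨δ / 2, half_pos hδ, fun z hz => ?_⟩
      refine ⟨δ / 2, half_pos hδ, fun u (hu : ρ z u < δ / 2) => hw (mem_ofPred.2 ?_)⟩
      linarith [htri w z u, mem_ofPred.1 hz]
    refine mem_of_superset (hO.mem_nhds ⟨ε, hε, subset_rfl⟩) fun w ⟨δ, hδ, hw⟩ => hsub (hw ?_)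
    simpa [(hzero w w).2 rfl] using hδ

theorem of_nhds_basis (hρ : IsQuasiMetric ρ)
    (h : ∀ x, (𝓝 x).HasBasis (fun ε : ℝ => 0 < ε) fun ε => {y | ρ x y < ε}) :
    IsCompatibleQuasiMetric ρ :=
  ⟨hρ, fun s => by simp only [isOpen_iff_mem_nhds, (h _).mem_iff, gt_iff_lt]⟩

theorem comap {Y : Type*} [TopologicalSpace Y] {f : Y → Z} (hρ : IsCompatibleQuasiMetric ρ)
    (hf : IsEmbedding f) : IsCompatibleQuasiMetric fun a b => ρ (f a) (f b) := by
  refine of_nhds_basis ⟨fun a b => hρ.1.1 _ _, fun a b => (hρ.1.2.1 _ _).trans hf.injective.eq_iff,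
    fun a b c => hρ.1.2.2 _ _ _⟩ fun a => ?_
  rw [hf.isInducing.nhds_eq_comap]
  exact (hρ.nhds_basis (f a)).comap f

theorem firstCountableTopology (hρ : IsCompatibleQuasiMetric ρ) : FirstCountableTopology Z :=
  ⟨fun x => HasBasis.isCountablyGenerated (p := fun _ : ℕ => True)
    (s := fun n => {y | ρ x y < 1 / (n + 1)}) <| (hρ.nhds_basis x).to_hasBasis
      (fun _ hε =>
        let ⟨n, hn⟩ := exists_nat_one_div_lt hε
        ⟨n, trivial, fun _ hy => lt_trans hy hn⟩)
      fun _ _ => ⟨_, Nat.one_div_pos_of_nat, subset_rfl⟩⟩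

theorem eq_of_mapClusterPt (hρ : IsCompatibleQuasiMetric ρ) {ι : Type*} {l : Filter ι}
    {z : ι → Z} {a p : Z} (ha : MapClusterPt a l z) (hp : Tendsto (fun i => ρ (z i) p) l (𝓝 0)) :
    a = p := by
  refine (hρ.1.2.1 a p).1 (le_antisymm (le_of_forall_pos_lt_add fun ε hε => ?_) (hρ.1.1 a p))
  have hnear : ∃ᶠ i in l, ρ a (z i) < ε / 2 :=
    ha.frequently ((hρ.nhds_basis a).mem_of_mem (half_pos hε))
  obtain ⟨i, hai, hip⟩ := (hnear.and_eventually (hp.eventually (gt_mem_nhds (half_pos hε)))).exists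
  linarith [hρ.1.2.2 a (z i) p]

theorem isGδ_diagonal [CompactSpace Z] (hρ : IsCompatibleQuasiMetric ρ) : IsGδ (diagonal Z) := by
  let O : ℕ → Z → Set Z := fun n z => interior {y | ρ z y < 1 / (n + 1)}
  have hcentre (n : ℕ) (z : Z) : z ∈ O n z :=
    mem_interior_iff_mem_nhds.2 ((hρ.nhds_basis z).mem_of_mem Nat.one_div_pos_of_nat)
  refine isGδ_iff_eq_iInter_nat.2 ⟨fun n => ⋃ z, O n z ×ˢ O n z,
    fun n => isOpen_iUnion fun z => isOpen_interior.prod isOpen_interior, ?_⟩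
  ext ⟨p, q⟩
  simp only [mem_diagonal_iff, mem_iInter, mem_iUnion, mem_prod]
  refine ⟨fun hpq => ?_, fun hpq => ?_⟩
  · subst hpq
    exact fun n => ⟨p, hcentre n p, hcentre n p⟩
  choose z hzp hzq using hpq
  obtain ⟨a, ha⟩ := exists_clusterPt_of_compactSpace (map z atTop)
  have key (r : Z) (hr : ∀ n, r ∈ O n (z n)) : a = r :=
    hρ.eq_of_mapClusterPt ha <| squeeze_zero (fun n => hρ.1.1 _ _)
      (fun n => (mem_ofPred.1 (interior_subset (hr n))).le)
      tendsto_one_div_add_atTop_nhds_zero_nat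
  exact (key p hzp).symm.trans (key q hzq)

end IsCompatibleQuasiMetric

section Metrizable

variable {Z : Type*} [TopologicalSpace Z]

theorem metrizableSpace_of_isGδ_diagonal [CompactSpace Z] [T2Space Z] (h : IsGδ (diagonal Z)) :
    MetrizableSpace Z := by
  obtain ⟨W, hWo, hW⟩ := isGδ_iff_eq_iInter_nat.1 h
  have hC (n : ℕ) : ∃ C ∈ 𝓝ˢ (diagonal Z), IsClosed C ∧ C ⊆ W n :=
    exists_mem_nhdsSet_isClosed_subset
      ((hWo n).mem_nhdsSet.2 (hW ▸ iInter_subset _ n)) isClosed_diagonal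
  choose C hCn hCc hCW using hC
  -- `⋂ n, C n` is the diagonal, so by compactness finitely many `C n` already lie in any
  -- open neighbourhood of it
  have hbasis : 𝓝ˢ (diagonal Z) = ⨅ n, 𝓟 (C n) := by
    refine le_antisymm (le_iInf fun n => le_principal_iff.2 (hCn n)) ?_
    intro G hG
    obtain ⟨U, hUo, hdU, hUG⟩ := mem_nhdsSet_iff_exists.1 hG
    obtain ⟨t, ht⟩ := hUo.isClosed_compl.isCompact.elim_finite_subfamily_closed C hCc <| by
      refine eq_empty_of_forall_notMem fun p ⟨hpU, hpC⟩ => hpU (hdU ?_)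
      rw [hW]
      exact mem_iInter.2 fun n => hCW n (mem_iInter.1 hpC n)
    refine mem_of_superset ((biInter_mem t.finite_toSet).2 fun n _ =>
      mem_iInf_of_mem n (mem_principal_self _)) fun p hp => hUG (by_contra fun hpU => ?_)
    exact ht.subset ⟨hpU, hp⟩
  let := uniformSpaceOfCompactR1 (γ := Z)
  have : (𝓤 Z).IsCountablyGenerated := by
    rw [← nhdsSet_diagonal_eq_uniformity, hbasis]
    exact isCountablyGenerated_seq C
  exact UniformSpace.metrizableSpace

end Metrizable

section Hemicompact

variable {X : Type*} [TopologicalSpace X]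

theorem hemicompact_of_exists_cofinal_compacts_notMem [T2Space X]
    (h : ∀ a : X, ∃ C : ℕ → Set X, (∀ n, IsCompact (C n)) ∧
      ∀ K, IsCompact K → a ∉ K → ∃ n, K ⊆ C n) :
    Hemicompact X := by
  rcases subsingleton_or_nontrivial X with hX | hX
  · exact ⟨fun _ => univ, fun _ => subsingleton_univ.isCompact, fun L _ => ⟨0, subset_univ L⟩⟩
  obtain ⟨a, b, hab⟩ := exists_pair_ne X
  obtain ⟨Ca, hCa, ha⟩ := h a
  obtain ⟨Cb, hCb, hb⟩ := h b
  obtain ⟨U, V, hU, hV, haU, hbV, hUV⟩ := t2_separation hab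
  refine ⟨fun n => Ca n.unpair.1 ∪ Cb n.unpair.2, fun n => (hCa _).union (hCb _), fun L hL => ?_⟩
  obtain ⟨m, hm⟩ := ha (L \ U) (hL.diff hU) fun h => h.2 haU
  obtain ⟨n, hn⟩ := hb (L \ V) (hL.diff hV) fun h => h.2 hbV
  refine ⟨Nat.pair m n, fun x hx => ?_⟩
  simp only [Nat.unpair_pair]
  by_cases hxU : x ∈ U
  · exact Or.inr (hn ⟨hx, hUV.notMem_of_mem_left hxU⟩)
  · exact Or.inl (hm ⟨hx, hxU⟩)

theorem Hemicompact.weaklyLocallyCompactSpace [FirstCountableTopology X] (hX : Hemicompact X) :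
    WeaklyLocallyCompactSpace X := by
  obtain ⟨K, hK, hcof⟩ := hX
  refine ⟨fun x => ?_⟩
  by_contra! hx
  obtain ⟨U, hU⟩ := (𝓝 x).exists_antitone_basis
  have hz (n : ℕ) : ∃ z ∈ U n, z ∉ ⋃ i ≤ n, K i :=
    not_subset.1 fun hsub => hx _ ((finite_le_nat n).isCompact_biUnion fun i _ => hK i)
      (mem_of_superset (hU.mem n) hsub)
  choose z hzU hzK using hz
  obtain ⟨m, hm⟩ := hcof _ (hU.tendsto hzU).isCompact_insert_range
  exact hzK m (mem_iUnion₂.2 ⟨m, le_rfl, hm (mem_insert_of_mem _ (mem_range_self m))⟩)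

theorem Hemicompact.metrizableSpace [WeaklyLocallyCompactSpace X] [T2Space X]
    (hX : Hemicompact X) (hmet : ∀ K : Set X, IsCompact K → MetrizableSpace K) :
    MetrizableSpace X := by
  obtain ⟨K, hK, hcof⟩ := hX
  have hcover : ⋃ n, interior (K n) = univ := eq_univ_of_forall fun x => by
    obtain ⟨s, hs, hsx⟩ := exists_compact_mem_nhds x
    obtain ⟨n, hn⟩ := hcof s hs
    exact mem_iUnion.2 ⟨n, interior_mono hn (mem_interior_iff_mem_nhds.2 hsx)⟩
  have (n : ℕ) : SecondCountableTopology (interior (K n)) := by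
    have := isCompact_iff_compactSpace.1 (hK n)
    have := hmet _ (hK n)
    let := metrizableSpaceMetric (K n)
    exact (IsEmbedding.inclusion interior_subset).secondCountableTopology
  have := secondCountableTopology_of_countable_cover (fun n => isOpen_interior) hcover
  infer_instance

end Hemicompact

namespace CL

variable {X : Type*} [TopologicalSpace X]

theorem tendsto_nhds_iff {ι : Type*} {l : Filter ι} {f : ι → CL X} {A : CL X} :
    Tendsto f l (𝓝 A) ↔
      (∀ U, IsOpen U → (A.carrier ∩ U).Nonempty → ∀ᶠ i in l, ((f i).carrier ∩ U).Nonempty) ∧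
      ∀ K, IsCompact K → A.carrier ⊆ Kᶜ → ∀ᶠ i in l, (f i).carrier ⊆ Kᶜ := by
  rw [show 𝓝 A = @nhds _ (fellTop X) A from rfl, fellTop, nhds_generateFrom]
  simp only [tendsto_iInf, tendsto_principal]
  constructor
  · intro h
    refine ⟨fun U hU hAU => h _ ⟨hAU, Or.inl ⟨U, hU, hAU.mono inter_subset_right, rfl⟩⟩,
      fun K hK hAK => h _ ⟨hAK, Or.inr ⟨K, hK, ?_, rfl⟩⟩⟩
    rintro rfl
    obtain ⟨x, hx⟩ := A.nonempty'
    exact hAK hx (mem_univ x)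
  · rintro ⟨hhit, hmiss⟩ S ⟨hAS, ⟨U, hU, -, rfl⟩ | ⟨K, hK, -, rfl⟩⟩
    exacts [hhit U hU hAS, hmiss K hK hAS]

def pair [T1Space X] (x y : X) : CL X :=
  ⟨{x, y}, insert_nonempty x {y}, (toFinite _).isClosed⟩

end CL

abbrev F₂ (X : Type*) [TopologicalSpace X] : Type _ :=
  {A : CL X // ∃ x y : X, A.carrier = {x, y}}

namespace F₂

variable {X : Type*} [TopologicalSpace X]

theorem tendsto_nhds_iff {ι : Type*} {l : Filter ι} {f : ι → F₂ X} {A : F₂ X} :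
    Tendsto f l (𝓝 A) ↔
      (∀ U, IsOpen U → (A.1.carrier ∩ U).Nonempty → ∀ᶠ i in l, ((f i).1.carrier ∩ U).Nonempty) ∧
      ∀ K, IsCompact K → A.1.carrier ⊆ Kᶜ → ∀ᶠ i in l, (f i).1.carrier ⊆ Kᶜ :=
  IsInducing.subtypeVal.tendsto_nhds_iff.trans CL.tendsto_nhds_iff

variable [T1Space X]

def pair (x y : X) : F₂ X := ⟨CL.pair x y, x, y, rfl⟩

def single (x : X) : F₂ X := pair x x

@[simp] theorem carrier_pair (x y : X) : (pair x y).1.carrier = {x, y} := rfl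

@[simp] theorem carrier_single (x : X) : (single x).1.carrier = {x} := pair_eq_singleton x

theorem single_injective : Function.Injective (single : X → F₂ X) := fun x y hxy =>
  singleton_injective (by simpa using congrArg (fun A : F₂ X => A.1.carrier) hxy)

theorem tendsto_pair_cocompact (a : X) : Tendsto (pair a) (cocompact X) (𝓝 (single a)) := by
  refine tendsto_nhds_iff.2 ⟨fun U _ haU => Eventually.of_forall fun z => ?_, fun K hK haK => ?_⟩
  · obtain ⟨w, hw, hwU⟩ := haU
    exact ⟨w, by simp_all, hwU⟩
  · filter_upwards [hK.compl_mem_cocompact] with z hz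
    simp_all [insert_subset_iff]

theorem exists_cofinal_compacts_notMem (a : X) [(𝓝 (single a)).IsCountablyGenerated] :
    ∃ C : ℕ → Set X, (∀ n, IsCompact (C n)) ∧ ∀ K, IsCompact K → a ∉ K → ∃ n, K ⊆ C n := by
  obtain ⟨B, hB⟩ := (𝓝 (single a)).exists_antitone_basis
  have hC (n : ℕ) : ∃ C, IsCompact C ∧ Cᶜ ⊆ pair a ⁻¹' B n :=
    mem_cocompact.1 (tendsto_pair_cocompact a (hB.mem n))
  choose C hC hCB using hC
  refine ⟨C, hC, fun K hK haK => ?_⟩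
  have hmiss : ∀ᶠ A in 𝓝 (single a), A.1.carrier ⊆ Kᶜ :=
    (tendsto_nhds_iff.1 tendsto_id).2 K hK (by simpa using haK)
  obtain ⟨n, -, hn⟩ := hB.toHasBasis.mem_iff.1 hmiss
  exact ⟨n, fun z hzK => by_contra fun hz => hn (hCB n hz) (mem_insert_of_mem a rfl) hzK⟩

variable [T2Space X]

theorem continuous_single : Continuous (single : X → F₂ X) :=
  continuous_iff_continuousAt.2 fun x => tendsto_nhds_iff.2
    ⟨fun U hU hxU => mem_of_superset (hU.mem_nhds (by simpa using hxU))
        fun y hy => ⟨y, by simp, hy⟩,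
      fun K hK hxK => mem_of_superset (hK.isClosed.isOpen_compl.mem_nhds (by simpa using hxK))
        fun y hy => by simpa using hy⟩

theorem isEmbedding_single : IsEmbedding (single : X → F₂ X) := by
  refine ⟨isInducing_iff_nhds.2 fun x => le_antisymm (continuous_single.tendsto x).le_comap ?_,
    single_injective⟩
  intro U hU
  obtain ⟨V, hVU, hV, hxV⟩ := mem_nhds_iff.1 hU
  have hit : ∀ᶠ A in 𝓝 (single x), (A.1.carrier ∩ V).Nonempty :=
    (tendsto_nhds_iff.1 tendsto_id).1 V hV ⟨x, by simp, hxV⟩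
  exact mem_comap.2 ⟨_, hit, fun y ⟨w, hw, hwV⟩ => hVU (by simp_all)⟩

end F₂

theorem of_quasiMetrizable_F2_fell {X : Type*} [TopologicalSpace X] [T2Space X]
    (h : QuasiMetrizable {A : CL X // ∃ x y : X, A.carrier = {x, y}}) :
    Hemicompact X ∧ LocallyCompactSpace X ∧ TopologicalSpace.MetrizableSpace X := by
  obtain ⟨d, hd⟩ := h
  have hd : IsCompatibleQuasiMetric d := hd
  have := hd.firstCountableTopology
  have : FirstCountableTopology X := F₂.isEmbedding_single.isInducing.firstCountableTopology
  have hemi : Hemicompact X :=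
    hemicompact_of_exists_cofinal_compacts_notMem fun a => F₂.exists_cofinal_compacts_notMem a
  have := hemi.weaklyLocallyCompactSpace
  have hmet (K : Set X) (hK : IsCompact K) : MetrizableSpace K := by
    have := isCompact_iff_compactSpace.1 hK
    exact metrizableSpace_of_isGδ_diagonal
      (hd.comap (F₂.isEmbedding_single.comp IsEmbedding.subtypeVal)).isGδ_diagonal
  exact ⟨hemi, WeaklyLocallyCompactSpace.locallyCompactSpace, hemi.metrizableSpace hmet⟩
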